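/- arXiv:0811.1245 — 3 statements merged into one kernel-verified Lean document; each statement's English description precedes it below -/
import Mathlib

section
/- Suppose f : (0,b) → (0,∞) is smooth, satisfies f(0)=0=f(b), f'(0)=1, f'(b)=-1, all even derivatives vanish at 0 and b, f'' ≤ 0 everywhere, f'''(0) < 0, and f'''(b) > 0. Then the scalar curvature R = -2(n-1) f''/f + (n-1)(n-2)(1-(f')²)/f² of the warped product metric dt² + f(t)² ds²_{n-1} is strictly positive on (0,b), provided n ≥ 3 and f''(t) < 0 for t near (but not at) 0 and b. -/
/-!
Since `f'' ≤ 0`, the derivative `f'` decreases from `f'(0) = 1` to `f'(b) = -1`, and it does so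
strictly near both endpoints, so `|f'| < 1` on `(0, b)`. Then the first term of `R` is
nonnegative and, as `n ≥ 3`, the second is positive.
-/

open Set Filter Topology

section AntitoneOfDerivNonpos

variable {g : ℝ → ℝ} {a b t : ℝ}

theorem apply_lt_apply_left_of_deriv_neg_nhdsGT (hg : ContinuousOn g (Icc a b))
    (hdiff : DifferentiableOn ℝ g (Ioo a b)) (hnonpos : ∀ x ∈ Ioo a b, deriv g x ≤ 0)
    (hneg : ∀ᶠ x in 𝓝[>] a, deriv g x < 0) (ht : t ∈ Ioc a b) : g t < g a := by
  obtain ⟨c, hac, hsub⟩ := mem_nhdsGT_iff_exists_Ioo_subset.1 hneg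
  set s := min c t
  have has : a < s := lt_min hac ht.1
  have hst : s ≤ t := min_le_right c t
  have hanti : AntitoneOn g (Icc a b) :=
    antitoneOn_of_deriv_nonpos (convex_Icc a b) hg (by rwa [interior_Icc])
      (by rwa [interior_Icc])
  have hstrict : StrictAntiOn g (Icc a s) := by
    refine strictAntiOn_of_deriv_neg (convex_Icc a s)
      (hg.mono (Icc_subset_Icc_right (hst.trans ht.2))) ?_
    rw [interior_Icc]
    exact fun x hx => hsub ⟨hx.1, hx.2.trans_le (min_le_left c t)⟩
  calc g t ≤ g s := hanti ⟨has.le, hst.trans ht.2⟩ ⟨ht.1.le, ht.2⟩ hst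
    _ < g a := hstrict (left_mem_Icc.2 has.le) (right_mem_Icc.2 has.le) has

theorem apply_right_lt_apply_of_deriv_neg_nhdsLT (hg : ContinuousOn g (Icc a b))
    (hdiff : DifferentiableOn ℝ g (Ioo a b)) (hnonpos : ∀ x ∈ Ioo a b, deriv g x ≤ 0)
    (hneg : ∀ᶠ x in 𝓝[<] b, deriv g x < 0) (ht : t ∈ Ico a b) : g b < g t := by
  obtain ⟨c, hcb, hsub⟩ := mem_nhdsLT_iff_exists_Ioo_subset.1 hneg
  set s := max c t
  have hsb : s < b := max_lt hcb ht.2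
  have hts : t ≤ s := le_max_right c t
  have hanti : AntitoneOn g (Icc a b) :=
    antitoneOn_of_deriv_nonpos (convex_Icc a b) hg (by rwa [interior_Icc])
      (by rwa [interior_Icc])
  have hstrict : StrictAntiOn g (Icc s b) := by
    refine strictAntiOn_of_deriv_neg (convex_Icc s b)
      (hg.mono (Icc_subset_Icc_left (ht.1.trans hts))) ?_
    rw [interior_Icc]
    exact fun x hx => hsub ⟨(le_max_left c t).trans_lt hx.1, hx.2⟩
  calc g b < g s := hstrict (left_mem_Icc.2 hsb.le) (right_mem_Icc.2 hsb.le) hsb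
    _ ≤ g t := hanti ⟨ht.1, ht.2.le⟩ ⟨ht.1.trans hts, hsb.le⟩ hts

end AntitoneOfDerivNonpos

theorem warped_scalar_curvature_pos_of_sq_deriv_lt_one {n f' f'' F : ℝ} (hn : 2 < n)
    (hF : 0 < F) (hf'' : f'' ≤ 0) (hf' : f' ^ 2 < 1) :
    0 < -2 * (n - 1) * f'' / F + (n - 1) * (n - 2) * (1 - f' ^ 2) / F ^ 2 := by
  have hconcave : 0 ≤ -2 * (n - 1) * f'' / F :=
    div_nonneg (by nlinarith) hF.le
  have hwarp : 0 < (n - 1) * (n - 2) * (1 - f' ^ 2) / F ^ 2 := by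
    have : 0 < n - 1 := by linarith
    have : 0 < n - 2 := by linarith
    have : 0 < 1 - f' ^ 2 := by linarith
    positivity
  linarith

theorem warped_scalar_curvature_positive_general (n : ℕ) (hn : 3 ≤ n) (b : ℝ)
    (f : ℝ → ℝ)
    (hsm : ContDiffOn ℝ (⊤ : ℕ∞) f (Set.Icc 0 b))
    (hpos : ∀ t ∈ Set.Ioo (0 : ℝ) b, 0 < f t)
    (hf'0 : derivWithin f (Set.Icc 0 b) 0 = 1)
    (hf'b : derivWithin f (Set.Icc 0 b) b = -1)
    (hconc : ∀ t ∈ Set.Ioo (0 : ℝ) b, deriv (deriv f) t ≤ 0)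
    (hnear : ∃ ε > 0, (∀ t ∈ Set.Ioo (0 : ℝ) ε, deriv (deriv f) t < 0) ∧
      ∀ t ∈ Set.Ioo (b - ε) b, deriv (deriv f) t < 0) :
    ∀ t ∈ Set.Ioo (0 : ℝ) b,
      0 < -2 * ((n : ℝ) - 1) * deriv (deriv f) t / f t +
        ((n : ℝ) - 1) * ((n : ℝ) - 2) * (1 - (deriv f t) ^ 2) / (f t) ^ 2 := by
  intro t ht
  obtain ⟨ε, hε, hleft, hright⟩ := hnear
  have hb : 0 < b := ht.1.trans ht.2
  -- Unlike `deriv f`, this version of `f'` is continuous up to the endpoints.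
  set g := derivWithin f (Icc 0 b)
  have hg : ContDiffOn ℝ 1 g (Icc 0 b) :=
    hsm.derivWithin (uniqueDiffOn_Icc hb) (WithTop.coe_le_coe.2 le_top)
  have hg_eq {x} (hx : x ∈ Ioo 0 b) : g =ᶠ[𝓝 x] deriv f := by
    filter_upwards [Ioo_mem_nhds hx.1 hx.2] with y hy
    exact derivWithin_of_mem_nhds (Icc_mem_nhds hy.1 hy.2)
  have hg' {x} (hx : x ∈ Ioo 0 b) : deriv g x = deriv (deriv f) x := (hg_eq hx).deriv_eq
  have hg_cont : ContinuousOn g (Icc 0 b) := hg.continuousOn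
  have hg_diff : DifferentiableOn ℝ g (Ioo 0 b) :=
    (hg.differentiableOn one_ne_zero).mono Ioo_subset_Icc_self
  have hg_nonpos (x) (hx : x ∈ Ioo 0 b) : deriv g x ≤ 0 := hg' hx ▸ hconc x hx
  have hlt : g t < 1 := hf'0 ▸ apply_lt_apply_left_of_deriv_neg_nhdsGT hg_cont hg_diff
    hg_nonpos (by
      filter_upwards [Ioo_mem_nhdsGT hε, Ioo_mem_nhdsGT hb] with x hxε hxb
      exact hg' hxb ▸ hleft x hxε) (Ioo_subset_Ioc_self ht)
  have hgt : -1 < g t := hf'b ▸ apply_right_lt_apply_of_deriv_neg_nhdsLT hg_cont hg_diff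
    hg_nonpos (by
      filter_upwards [Ioo_mem_nhdsLT (sub_lt_self b hε), Ioo_mem_nhdsLT hb] with x hxε hxb
      exact hg' hxb ▸ hright x hxε) (Ioo_subset_Ico_self ht)
  rw [(hg_eq ht).eq_of_nhds] at hlt hgt
  exact warped_scalar_curvature_pos_of_sq_deriv_lt_one (by exact_mod_cast hn) (hpos t ht)
    (hconc t ht) (by nlinarith)

/-- Suppose `f : (0,b) → (0,∞)` is smooth (up to the boundary), satisfies
`f(0)=0=f(b)`, `f'(0)=1`, `f'(b)=-1`, all even derivatives vanish at `0` and `b`,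
`f'' ≤ 0` everywhere, `f'''(0) < 0`, `f'''(b) > 0`, and `f''(t) < 0` for `t` near
(but not at) `0` and `b`.  Then, provided `n ≥ 3`, the scalar curvature
`R = -2(n-1) f''/f + (n-1)(n-2)(1-(f')²)/f²` of the warped product metric
`dt² + f(t)² ds²_{n-1}` is strictly positive on `(0,b)`. -/
theorem warped_scalar_curvature_positive (n : ℕ) (hn : 3 ≤ n) (b : ℝ) (hb : 0 < b)
    (f : ℝ → ℝ)
    (hsm : ContDiffOn ℝ (⊤ : ℕ∞) f (Set.Icc 0 b))
    (hpos : ∀ t ∈ Set.Ioo (0 : ℝ) b, 0 < f t)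
    (hf0 : f 0 = 0) (hfb : f b = 0)
    (hf'0 : derivWithin f (Set.Icc 0 b) 0 = 1)
    (hf'b : derivWithin f (Set.Icc 0 b) b = -1)
    (heven : ∀ k : ℕ, Even k → iteratedDerivWithin k f (Set.Icc 0 b) 0 = 0 ∧
      iteratedDerivWithin k f (Set.Icc 0 b) b = 0)
    (hconc : ∀ t ∈ Set.Ioo (0 : ℝ) b, deriv (deriv f) t ≤ 0)
    (hf'''0 : iteratedDerivWithin 3 f (Set.Icc 0 b) 0 < 0)
    (hf'''b : 0 < iteratedDerivWithin 3 f (Set.Icc 0 b) b)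
    (hnear : ∃ ε > 0, (∀ t ∈ Set.Ioo (0 : ℝ) ε, deriv (deriv f) t < 0) ∧
      ∀ t ∈ Set.Ioo (b - ε) b, deriv (deriv f) t < 0) :
    ∀ t ∈ Set.Ioo (0 : ℝ) b,
      0 < -2 * ((n : ℝ) - 1) * deriv (deriv f) t / f t +
        ((n : ℝ) - 1) * ((n : ℝ) - 2) * (1 - (deriv f t) ^ 2) / (f t) ^ 2 :=
  warped_scalar_curvature_positive_general n hn b f hsm hpos hf'0 hf'b hconc hnear
end

section
/- Let C, C' > 0 and R₀ > 0 be constants, let q ≥ 2 be an integer, and fix θ₀ ∈ (0, arcsin(√(R₀/C))). Then there exists r₁ > 0 such that for all θ ∈ [0, θ₀] and all r ∈ (0, r₁], the quantity R₀ · r/sin θ + (q-1) sin θ / r - C r sin θ is strictly positive (interpreted as +∞ when θ = 0). -/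
/-!
Write `s = sin θ`. Then `R₀ r / s - C r s = r (R₀ - C s²) / s`, and `θ < arcsin √(R₀/C)` gives
`s² < R₀/C`, so this part is positive for every `r > 0`; the remaining term `(q - 1) s / r` is
nonnegative. Hence any `r₁ > 0` works.
-/

open Real

theorem sin_sq_lt_of_lt_arcsin_sqrt {θ x : ℝ} (hθ : 0 ≤ θ) (h : θ < arcsin √x) :
    sin θ ^ 2 < x := by
  have hθ_lt : θ < π / 2 := h.trans_le (arcsin_le_pi_div_two _)
  have hsin_nonneg : 0 ≤ sin θ := sin_nonneg_of_nonneg_of_le_pi hθ (by linarith [pi_pos])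
  have hsin_lt : sin θ < √x := (lt_arcsin_iff_sin_lt' ⟨by linarith [pi_pos], hθ_lt⟩).1 h
  exact (lt_sqrt hsin_nonneg).1 hsin_lt

theorem bending_rhs_pos {R₀ C k r s : ℝ} (hs : 0 < s) (hr : 0 < r) (hk : 0 ≤ k)
    (hCs : C * s ^ 2 < R₀) : 0 < R₀ * r / s + k * s / r - C * r * s := by
  have hsplit : R₀ * r / s + k * s / r - C * r * s = r * (R₀ - C * s ^ 2) / s + k * s / r := by
    field_simp
    ring
  rw [hsplit]
  have hmain : 0 < r * (R₀ - C * s ^ 2) / s := div_pos (mul_pos hr (sub_pos.2 hCs)) hs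
  have hrest : 0 ≤ k * s / r := div_nonneg (mul_nonneg hk hs.le) hr.le
  linarith

theorem initial_bending_estimate_general (C R₀ θ₀ : ℝ) (q : ℕ)
    (hC : 0 < C) (hq : 2 ≤ q)
    (hθ₀ : θ₀ ∈ Set.Ioo 0 (Real.arcsin (Real.sqrt (R₀ / C)))) :
    ∃ r₁ > 0, ∀ θ ∈ Set.Icc (0 : ℝ) θ₀, θ ≠ 0 → ∀ r ∈ Set.Ioc (0 : ℝ) r₁,
      0 < R₀ * r / Real.sin θ + ((q : ℝ) - 1) * Real.sin θ / r -
        C * r * Real.sin θ := by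
  refine ⟨1, one_pos, ?_⟩
  rintro θ ⟨hθ_nonneg, hθ_le⟩ hθ_ne r ⟨hr, -⟩
  have hθ_lt : θ < arcsin √(R₀ / C) := hθ_le.trans_lt hθ₀.2
  have hsin_pos : 0 < sin θ :=
    sin_pos_of_pos_of_lt_pi (hθ_nonneg.lt_of_ne' hθ_ne)
      (hθ_lt.trans_le ((arcsin_le_pi_div_two _).trans (by linarith [pi_pos])))
  have hCsin : C * sin θ ^ 2 < R₀ :=
    (lt_div_iff₀' hC).1 (sin_sq_lt_of_lt_arcsin_sqrt hθ_nonneg hθ_lt)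
  have hq_sub : (0 : ℝ) ≤ (q : ℝ) - 1 := by
    have : (2 : ℝ) ≤ q := by exact_mod_cast hq
    linarith
  exact bending_rhs_pos hsin_pos hr hq_sub hCsin

/-- Let `C, C' > 0` and `R₀ > 0` be constants, let `q ≥ 2` be an integer, and fix
`θ₀ ∈ (0, arcsin √(R₀/C))`.  Then there exists `r₁ > 0` such that for all
`θ ∈ [0, θ₀]` and all `r ∈ (0, r₁]`, the quantity
`R₀ r/sin θ + (q-1) sin θ/r - C r sin θ` is strictly positive (the case `θ = 0`
is interpreted as `+∞` and so is excluded from the quantification). -/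
theorem initial_bending_estimate (C C' R₀ θ₀ : ℝ) (q : ℕ)
    (hC : 0 < C) (hC' : 0 < C') (hR₀ : 0 < R₀) (hq : 2 ≤ q)
    (hθ₀ : θ₀ ∈ Set.Ioo 0 (Real.arcsin (Real.sqrt (R₀ / C)))) :
    ∃ r₁ > 0, ∀ θ ∈ Set.Icc (0 : ℝ) θ₀, θ ≠ 0 → ∀ r ∈ Set.Ioc (0 : ℝ) r₁,
      0 < R₀ * r / Real.sin θ + ((q : ℝ) - 1) * Real.sin θ / r -
        C * r * Real.sin θ :=
  initial_bending_estimate_general C R₀ θ₀ q hC hq hθ₀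
end

section
/- Suppose 0 < r < min{1/√(4C), 1/√(2C')} with C, C' > 0, θ ∈ (0, π/2], and q ≥ 2 an integer. If k < sin θ/(2r), then k(1 + C'r²) < R₀ r/sin θ + (q-1) sin θ/r - C r sin θ for any R₀ ≥ 0. -/
/-!
Both sides are compared with `(3/4) sin θ / r`. Since `C' r² < 1/2`, the factor `1 + C' r²` is
below `3/2`, so `k (1 + C' r²) < (3/2) · sin θ / (2r)`; since `C r² < 1/4` and `q - 1 ≥ 1`,
`(q - 1) sin θ / r - C r sin θ ≥ (1 - 1/4) sin θ / r`, and the `R₀` term is nonnegative.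
-/

open Real

lemma mul_sq_lt_one_of_lt_one_div_sqrt {a r : ℝ} (hr : 0 < r) (h : r < 1 / √a) :
    a * r ^ 2 < 1 := by
  rcases le_or_gt a 0 with ha | ha
  · exact (mul_nonpos_of_nonpos_of_nonneg ha (sq_nonneg r)).trans_lt one_pos
  · rw [one_div, ← sqrt_inv, lt_sqrt hr.le] at h
    calc a * r ^ 2 < a * a⁻¹ := mul_lt_mul_of_pos_left h ha
      _ = 1 := mul_inv_cancel₀ ha.ne'

lemma three_quarters_le_mul_div_sub {p C r s : ℝ} (hp : 1 ≤ p) (hr : 0 < r) (hs : 0 ≤ s)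
    (hC : 4 * C * r ^ 2 < 1) :
    3 / 4 * (s / r) ≤ p * s / r - C * r * s := by
  have key : p * s / r - C * r * s - 3 / 4 * (s / r) = s / r * (p - C * r ^ 2 - 3 / 4) := by
    field_simp
  nlinarith [div_nonneg hs hr.le]

theorem curvature_inequality_reduction_general (C C' R₀ k r θ : ℝ) (q : ℕ)
    (hC' : 0 < C') (hq : 2 ≤ q)
    (hr0 : 0 < r) (hr : r < min (1 / Real.sqrt (4 * C)) (1 / Real.sqrt (2 * C')))
    (hθ : θ ∈ Set.Ioc (0 : ℝ) (π / 2)) (hR₀ : 0 ≤ R₀)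
    (hk : k < Real.sin θ / (2 * r)) :
    k * (1 + C' * r ^ 2) <
      R₀ * r / Real.sin θ + ((q : ℝ) - 1) * Real.sin θ / r - C * r * Real.sin θ := by
  have hs : 0 < sin θ := sin_pos_of_pos_of_lt_pi hθ.1 (by linarith [hθ.2, pi_pos])
  have hCr : 4 * C * r ^ 2 < 1 :=
    mul_sq_lt_one_of_lt_one_div_sqrt hr0 (hr.trans_le (min_le_left _ _))
  have hC'r : 2 * C' * r ^ 2 < 1 :=
    mul_sq_lt_one_of_lt_one_div_sqrt hr0 (hr.trans_le (min_le_right _ _))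
  have hq1 : (1 : ℝ) ≤ q - 1 := by
    have : (2 : ℝ) ≤ q := by exact_mod_cast hq
    linarith
  calc k * (1 + C' * r ^ 2) < sin θ / (2 * r) * (3 / 2) :=
        mul_lt_mul_of_le_of_lt_of_nonneg_of_pos hk.le (by linarith) (by positivity) (by positivity)
    _ = 3 / 4 * (sin θ / r) := by field_simp; ring
    _ ≤ (q - 1) * sin θ / r - C * r * sin θ := three_quarters_le_mul_div_sub hq1 hr0 hs.le hCr
    _ ≤ R₀ * r / sin θ + ((q : ℝ) - 1) * sin θ / r - C * r * sin θ := by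
        rw [add_sub_assoc]
        exact le_add_of_nonneg_left (by positivity)

/-- Suppose `0 < r < min (1/√(4C)) (1/√(2C'))` with `C, C' > 0`, `θ ∈ (0, π/2]`,
and `q ≥ 2` an integer.  If `k < sin θ / (2r)`, then
`k(1 + C'r²) < R₀ r / sin θ + (q-1) sin θ / r - C r sin θ` for any `R₀ ≥ 0`. -/
theorem curvature_inequality_reduction (C C' R₀ k r θ : ℝ) (q : ℕ)
    (hC : 0 < C) (hC' : 0 < C') (hq : 2 ≤ q)
    (hr0 : 0 < r) (hr : r < min (1 / Real.sqrt (4 * C)) (1 / Real.sqrt (2 * C')))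
    (hθ : θ ∈ Set.Ioc (0 : ℝ) (π / 2)) (hR₀ : 0 ≤ R₀)
    (hk : k < Real.sin θ / (2 * r)) :
    k * (1 + C' * r ^ 2) <
      R₀ * r / Real.sin θ + ((q : ℝ) - 1) * Real.sin θ / r - C * r * Real.sin θ :=
  curvature_inequality_reduction_general C C' R₀ k r θ q hC' hq hr0 hr hθ hR₀ hk
end
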